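/- Index the 15 coordinates by the pairs z_{ij} (1≤i<j≤3), z_{i\bar j} (i,j ∈ {1,2,3}), and z_{\bar i\bar j} (1≤i<j≤3), and let F be the cubic form on ℂ^{15} given by the triple wedge product of 2-forms on a complex 3-torus: F(x) = ((∑ x_{ij} dz_i∧dz_j + ∑ x_{i\bar j} dz_i∧d\bar z_j + ∑ x_{\bar i\bar j} d\bar z_i∧d\bar z_j)^3 evaluated against dz_1∧dz_2∧dz_3∧d\bar z_1∧d\bar z_2∧d\bar z_3). If q ∈ ℂ^{15} is a point at which the Hessian matrix of F has rank at most 1, then q = 0. -/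

import Mathlib

open MvPolynomial

/-- The Hessian matrix of a multivariate polynomial at a point. -/
noncomputable def hessian {σ : Type*} (F : MvPolynomial σ ℂ) (p : σ → ℂ) :
    Matrix σ σ ℂ :=
  fun i j => eval p (pderiv i (pderiv j F))

/-- Index set for the 15 coordinates on `Λ²(ℂ⁶)*`: unordered pairs from the basis
`dz₁,dz₂,dz₃,d\bar z₁,d\bar z₂,d\bar z₃` (indices `0,1,2` are the `dzᵢ` and
`3,4,5` are the `d\bar zⱼ`).  So `z_{ij} ↔ (i-1,j-1)`, `z_{i\bar j} ↔ (i-1, j+2)`,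
`z_{\bar i\bar j} ↔ (i+2, j+2)`. -/
abbrev Idx : Type := {p : Fin 6 × Fin 6 // p.1 < p.2}

/-- The antisymmetric matrix of coordinates of a general 2-form `α`. -/
noncomputable def coordMat : Fin 6 → Fin 6 → MvPolynomial Idx ℂ := fun i j =>
  if h : i < j then X ⟨(i, j), h⟩
  else if h : j < i then -X ⟨(j, i), h⟩ else 0

/-- The cubic form `F` on `ℂ¹⁵ = Λ²(ℂ⁶)*` given by the coefficient of the top form
`dz₁∧dz₂∧dz₃∧d\bar z₁∧d\bar z₂∧d\bar z₃` in `α∧α∧α`: writing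
`α = (1/2)∑_{i,j} A_{ij} e_i∧e_j` with `A` antisymmetric, this coefficient is
`(1/8)·∑_{σ ∈ S₆} sign(σ)·A_{σ(1)σ(2)}·A_{σ(3)σ(4)}·A_{σ(5)σ(6)}`. -/
noncomputable def wedgeCubic : MvPolynomial Idx ℂ :=
  C (8⁻¹ : ℂ) * ∑ σ : Equiv.Perm (Fin 6),
    C ((Equiv.Perm.sign σ : ℤ) : ℂ) *
      (coordMat (σ 0) (σ 1) * (coordMat (σ 2) (σ 3) * coordMat (σ 4) (σ 5)))


/-!
Writing `A` for the generic skew `6 × 6` matrix of coordinates, the sum over `S₆` defining `F`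
collapses to `48 Pf(A)`, so `F = 6 Pf(A)`. Every monomial of the Pfaffian is a product of three
distinct variables, hence the Hessian `H` of `F` has zero diagonal, and
`∂²F / ∂x_{cd} ∂x_{ef} = ± 6 x_{ab}` whenever `{a, b, c, d, e, f} = {1, …, 6}`. The principal
`2 × 2` minors of the symmetric matrix `H` are `-H_{ij}²`, so `rank H ≤ 1` forces `H = 0`, and
then every coordinate of `q` vanishes.
-/

open Equiv

theorem Equiv.Perm.decomposeFin_symm_apply_of_ne_zero {n : ℕ} (p : Fin (n + 1))
    (e : Perm (Fin n)) {k : Fin (n + 1)} (hk : k ≠ 0) :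
    Perm.decomposeFin.symm (p, e) k = swap 0 p (e (k.pred hk)).succ := by
  rw [← Perm.decomposeFin_symm_apply_succ, Fin.succ_pred]

theorem Fintype.sum_perm_fin_succ {n : ℕ} {M : Type*} [AddCommMonoid M]
    (f : Perm (Fin (n + 1)) → M) :
    ∑ σ, f σ = ∑ p, ∑ e : Perm (Fin n), f (Perm.decomposeFin.symm (p, e)) := by
  rw [← Equiv.sum_comp Perm.decomposeFin.symm, Fintype.sum_prod_type]

/-- The Pfaffian of a `6 × 6` matrix, expanded along the first row. -/
def pfaffian6 {R : Type*} [CommRing R] (A : Fin 6 → Fin 6 → R) : R :=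
  A 0 1 * (A 2 3 * A 4 5 - A 2 4 * A 3 5 + A 2 5 * A 3 4)
  - A 0 2 * (A 1 3 * A 4 5 - A 1 4 * A 3 5 + A 1 5 * A 3 4)
  + A 0 3 * (A 1 2 * A 4 5 - A 1 4 * A 2 5 + A 1 5 * A 2 4)
  - A 0 4 * (A 1 2 * A 3 5 - A 1 3 * A 2 5 + A 1 5 * A 2 3)
  + A 0 5 * (A 1 2 * A 3 4 - A 1 3 * A 2 4 + A 1 4 * A 2 3)

theorem sum_perm_sign_mul_eq_pfaffian6 {R : Type*} [CommRing R] (A : Fin 6 → Fin 6 → R)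
    (hA : ∀ i j, j < i → A i j = -A j i) :
    ∑ σ : Perm (Fin 6),
        ((Perm.sign σ : ℤ) : R) * (A (σ 0) (σ 1) * (A (σ 2) (σ 3) * A (σ 4) (σ 5))) =
      48 * pfaffian6 A := by
  simp only [Fintype.sum_perm_fin_succ, Fin.sum_univ_six, Fin.sum_univ_five, Fin.sum_univ_four,
    Fin.sum_univ_three, Fin.sum_univ_two, Fintype.sum_unique, Perm.default_eq,
    Perm.decomposeFin.symm_sign, Perm.sign_one, Perm.decomposeFin_symm_apply_zero,
    Perm.decomposeFin_symm_apply_of_ne_zero, Perm.one_apply, swap_apply_def, ne_eq,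
    Fin.reduceEq, not_false_eq_true, Fin.reducePred, Fin.reduceSucc, Fin.isValue, ↓reduceIte]
  simp (disch := decide) only [hA]
  rw [pfaffian6]
  push_cast
  ring

theorem MvPolynomial.pderiv_pderiv_comm {R σ : Type*} [CommSemiring R] (i j : σ)
    (p : MvPolynomial σ R) : pderiv i (pderiv j p) = pderiv j (pderiv i p) := by
  classical
  induction p using MvPolynomial.induction_on with
  | C a => simp
  | add p q hp hq => simp only [map_add, hp, hq]
  | mul_X p k hp =>
    simp only [pderiv_mul, map_add, pderiv_X, Pi.single_apply, hp]
    split_ifs <;> simp [add_right_comm]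

theorem hessian_isSymm {σ : Type*} (F : MvPolynomial σ ℂ) (p : σ → ℂ) :
    (hessian F p).IsSymm := by
  ext i j
  simp only [Matrix.transpose_apply, hessian, MvPolynomial.pderiv_pderiv_comm]

theorem Matrix.mul_eq_mul_of_rank_le_one {m n K : Type*} [Fintype n] [Field K]
    {A : Matrix m n K} (h : A.rank ≤ 1) (i j : m) (k l : n) :
    A i k * A j l = A i l * A j k := by
  by_contra hne
  have hunit : IsUnit (A.submatrix ![i, j] ![k, l]) := by
    rw [Matrix.isUnit_iff_isUnit_det, Matrix.det_fin_two]
    exact (sub_ne_zero.mpr hne).isUnit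
  have := (rank_of_isUnit _ hunit).symm.trans_le ((A.rank_submatrix_le _ _).trans h)
  simp at this

theorem Matrix.IsSymm.eq_zero_of_rank_le_one {n K : Type*} [Fintype n] [Field K]
    {A : Matrix n n K} (hA : A.IsSymm) (h : A.rank ≤ 1) (hdiag : ∀ i, A i i = 0) : A = 0 := by
  ext i j
  have := Matrix.mul_eq_mul_of_rank_le_one h i j i j
  rw [hdiag, hdiag, zero_mul, hA.apply i j] at this
  exact mul_self_eq_zero.mp this.symm

theorem coordMat_eq_neg_of_lt {i j : Fin 6} (h : j < i) : coordMat i j = -coordMat j i := by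
  simp [coordMat, h, h.not_gt]

theorem coordMat_eq_X {i j : Fin 6} (h : i < j) : coordMat i j = X ⟨(i, j), h⟩ := by
  simp [coordMat, h]

theorem wedgeCubic_eq : wedgeCubic = C 6 * pfaffian6 coordMat := by
  rw [wedgeCubic]
  simp_rw [map_intCast]
  rw [sum_perm_sign_mul_eq_pfaffian6 coordMat (fun _ _ => coordMat_eq_neg_of_lt), ← mul_assoc,
    ← map_ofNat C 48, ← map_mul]
  norm_num

theorem hessian_wedgeCubic_apply (q : Idx → ℂ) (r c : Idx) :
    hessian wedgeCubic q r c = 6 * eval q (pderiv r (pderiv c (pfaffian6 coordMat))) := by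
  simp [hessian, wedgeCubic_eq]

theorem pderiv_pderiv_pfaffian6_coordMat_self (k : Idx) :
    pderiv k (pderiv k (pfaffian6 coordMat)) = 0 := by
  obtain ⟨⟨a, b⟩, hab⟩ := k
  fin_cases a <;> fin_cases b <;> simp [pfaffian6, coordMat_eq_X] at hab ⊢

abbrev idx (i j : Fin 6) (h : i < j := by decide) : Idx := ⟨(i, j), h⟩

theorem exists_pderiv_pderiv_pfaffian6_coordMat_eq_X (k : Idx) :
    ∃ r c : Idx, pderiv r (pderiv c (pfaffian6 coordMat)) = X k := by
  obtain ⟨⟨a, b⟩, hab⟩ := k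
  fin_cases a <;> fin_cases b <;> try simp at hab
  -- `r, c` complete `k` to a perfect matching whose term in the Pfaffian has sign `+`.
  on_goal 1 => exists idx 2 3, idx 4 5
  on_goal 2 => exists idx 1 4, idx 3 5
  on_goal 3 => exists idx 1 2, idx 4 5
  on_goal 4 => exists idx 1 3, idx 2 5
  on_goal 5 => exists idx 1 2, idx 3 4
  on_goal 6 => exists idx 0 3, idx 4 5
  on_goal 7 => exists idx 0 4, idx 2 5
  on_goal 8 => exists idx 0 2, idx 3 5
  on_goal 9 => exists idx 0 3, idx 2 4
  on_goal 10 => exists idx 0 1, idx 4 5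
  on_goal 11 => exists idx 0 3, idx 1 5
  on_goal 12 => exists idx 0 1, idx 3 4
  on_goal 13 => exists idx 0 1, idx 2 5
  on_goal 14 => exists idx 0 2, idx 1 4
  on_goal 15 => exists idx 0 1, idx 2 3
  all_goals simp [pfaffian6, coordMat_eq_X]

/-- If the Hessian of the cubic intersection form of a complex 3-torus has rank at
most 1 at a point `q ∈ ℂ¹⁵ = H²(A,ℂ)`, then `q = 0`. -/
theorem stmt4 (q : Idx → ℂ) (h : (hessian wedgeCubic q).rank ≤ 1) : q = 0 := by
  have hdiag : ∀ k, hessian wedgeCubic q k k = 0 := fun k => by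
    simp [hessian_wedgeCubic_apply, pderiv_pderiv_pfaffian6_coordMat_self]
  have hH : hessian wedgeCubic q = 0 := (hessian_isSymm _ _).eq_zero_of_rank_le_one h hdiag
  funext k
  obtain ⟨r, c, hrc⟩ := exists_pderiv_pderiv_pfaffian6_coordMat_eq_X k
  simpa [hessian_wedgeCubic_apply, hrc] using congrFun (congrFun hH r) c
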